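/- The first regularized smoothing factor has the limiting behavior: for every δ > 0, the function r ↦ s₁(r/δ)/r, defined for r ≠ 0, tends to 16/(3δ√π) as r → 0. -/

import Mathlib

/-!
Since `s₁ 0 = 0`, the quotient `s₁ (r / δ) / r` is a difference quotient of `r ↦ s₁ (r / δ)` at
`0`, so it tends to `s₁' 0 / δ`. Differentiating `erf` by the fundamental theorem of calculus gives
`s₁' r = 8 (r⁴ - 4 r² + 2) e^{-r²} / (3 √π)`, hence `s₁' 0 = 16 / (3 √π)`.
-/

open Real Filter Topology

/-- The error function erf(r) = (2/√π)·∫₀ʳ exp(−t²) dt. -/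
noncomputable def erf (r : ℝ) : ℝ := (2 / Real.sqrt π) * ∫ t in (0 : ℝ)..r, Real.exp (-t ^ 2)

/-- The first smoothing factor s₁. -/
noncomputable def s₁ (r : ℝ) : ℝ :=
  erf r - (2 / 3) * r * (2 * r ^ 2 - 5) * Real.exp (-r ^ 2) / Real.sqrt π

/-- The second smoothing factor s₂. -/
noncomputable def s₂ (r : ℝ) : ℝ :=
  erf r - (2 / 3) * r * (4 * r ^ 4 - 14 * r ^ 2 + 3) * Real.exp (-r ^ 2) / Real.sqrt π

theorem hasDerivAt_erf (x : ℝ) : HasDerivAt erf (2 / Real.sqrt π * Real.exp (-x ^ 2)) x := by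
  have hcont : Continuous fun t : ℝ => Real.exp (-t ^ 2) := by fun_prop
  exact ((hcont.integral_hasStrictDerivAt 0 x).hasDerivAt).const_mul _

theorem hasDerivAt_s₁ (x : ℝ) :
    HasDerivAt s₁ (8 * (x ^ 4 - 4 * x ^ 2 + 2) * Real.exp (-x ^ 2) / (3 * Real.sqrt π)) x := by
  have hexp : HasDerivAt (fun y : ℝ => Real.exp (-y ^ 2)) (Real.exp (-x ^ 2) * (-(2 * x))) x := by
    simpa using ((hasDerivAt_pow 2 x).neg).exp
  have hpoly : HasDerivAt (fun y : ℝ => (2 / 3) * y * (2 * y ^ 2 - 5)) (4 * x ^ 2 - 10 / 3) x :=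
    (((hasDerivAt_id x).const_mul (2 / 3)).mul
      (((hasDerivAt_pow 2 x).const_mul 2).sub_const 5)).congr_deriv (by
        simp only [id_eq, Nat.cast_ofNat, Nat.add_one_sub_one, pow_one]
        ring)
  have hsqrt : Real.sqrt π ≠ 0 := (Real.sqrt_pos.mpr Real.pi_pos).ne'
  refine ((hasDerivAt_erf x).sub ((hpoly.mul hexp).div_const (Real.sqrt π))).congr_deriv ?_
  field_simp
  ring

theorem s₁_zero : s₁ 0 = 0 := by
  simp [s₁, erf]

theorem HasDerivAt.tendsto_comp_div_const_div_self {𝕜 : Type*} [NontriviallyNormedField 𝕜]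
    {f : 𝕜 → 𝕜} {f' : 𝕜} (hf : HasDerivAt f f' 0) (hf0 : f 0 = 0) (δ : 𝕜) :
    Tendsto (fun r => f (r / δ) / r) (𝓝[≠] 0) (𝓝 (f' / δ)) := by
  have hcomp : HasDerivAt (fun r => f (r / δ)) (f' * (1 / δ)) 0 := by
    have hf : HasDerivAt f f' (0 / δ) := by rwa [zero_div]
    exact hf.comp 0 ((hasDerivAt_id 0).div_const δ)
  rw [mul_one_div] at hcomp
  refine (hasDerivAt_iff_tendsto_slope.mp hcomp).congr fun r => ?_
  simp [slope_def_field, hf0]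

theorem s1_limit_at_zero_general (δ : ℝ) :
    Tendsto (fun r : ℝ => s₁ (r / δ) / r) (𝓝[≠] 0)
      (𝓝 (16 / (3 * δ * Real.sqrt π))) := by
  have hs₁ : HasDerivAt s₁ (16 / (3 * Real.sqrt π)) 0 := by
    convert hasDerivAt_s₁ 0 using 1
    norm_num
  convert hs₁.tendsto_comp_div_const_div_self s₁_zero δ using 2
  ring

/-- For every δ > 0, s₁(r/δ)/r tends to 16/(3δ√π) as r → 0 (r ≠ 0). -/
theorem s1_limit_at_zero (δ : ℝ) (hδ : 0 < δ) :
    Tendsto (fun r : ℝ => s₁ (r / δ) / r) (𝓝[≠] 0)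
      (𝓝 (16 / (3 * δ * Real.sqrt π))) :=
  s1_limit_at_zero_general δ
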